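/- arXiv:1208.3533 — 8 statements merged into one kernel-verified Lean document; each statement's English description precedes it below -/
import Mathlib

section
/- Let (X, d) be a metric space, P a finite subset of X, r ≥ 0, and B a positive integer such that for every p ∈ P, every r-independent subset of N_r(p) has at most B elements. Then for every r-independent subset S of P and every subset S* of P satisfying the r-coverage condition on P, it holds that |S| ≤ B · |S*|. In particular, any r-DisC diverse subset of P is at most B times larger than any minimum r-DisC diverse subset of P. -/
/-!
Assign to every point of `S` a point of `S*` within distance `r`. The points sent to a given
`q ∈ S*` are pairwise more than `r` apart and all lie within `r` of `q`: if `q` is one of them it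
is the only one, and otherwise they form an `r`-independent subset of `N_r(q)`. Either way at most
`B` points of `S` go to each point of `S*`.
-/

section

variable {X : Type*} [PseudoMetricSpace X]

theorem Finset.eq_singleton_of_pairwise_dist_gt {A : Finset X} {r : ℝ} {q : X}
    (hA : (A : Set X).Pairwise fun a b => r < dist a b) (hq : q ∈ A)
    (hnear : ∀ a ∈ A, dist a q ≤ r) : A = {q} :=
  Finset.eq_singleton_iff_unique_mem.mpr ⟨hq, fun a ha => by
    by_contra hne
    exact (hA ha hq hne).not_ge (hnear a ha)⟩

theorem Finset.card_le_of_pairwise_dist_gt_of_dist_le {P A : Finset X} {r : ℝ} {B : ℕ}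
    (hB : 0 < B)
    (hBound : ∀ p ∈ P, ∀ A : Finset X,
      (∀ a ∈ A, a ∈ P ∧ a ≠ p ∧ dist p a ≤ r) →
      (∀ a ∈ A, ∀ b ∈ A, a ≠ b → dist a b > r) →
      A.card ≤ B)
    {q : X} (hq : q ∈ P) (hAP : A ⊆ P) (hA : (A : Set X).Pairwise fun a b => r < dist a b)
    (hnear : ∀ a ∈ A, dist a q ≤ r) : A.card ≤ B := by
  by_cases hqA : q ∈ A
  · rw [Finset.eq_singleton_of_pairwise_dist_gt hA hqA hnear, Finset.card_singleton]
    exact hB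
  · refine hBound q hq A (fun a ha => ⟨hAP ha, ?_, ?_⟩) (fun a ha b hb hab => hA ha hb hab)
    · exact ne_of_mem_of_not_mem ha hqA
    · exact dist_comm q a ▸ hnear a ha

end

/-- In a metric space, if every object `p ∈ P` has at most `B`
pairwise `r`-independent neighbors (points of `P` other than `p` at distance at
most `r` from `p`), then any `r`-independent subset `S` of `P` is at most `B`
times larger than any subset `S*` of `P` satisfying the `r`-coverage condition.
In particular, any `r`-DisC diverse subset is at most `B` times larger than any
minimum `r`-DisC diverse subset. -/
theorem disc_size_bound {X : Type*} [MetricSpace X] (P : Finset X) (r : ℝ) (hr : 0 ≤ r)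
    (B : ℕ) (hB : 0 < B)
    (hBound : ∀ p ∈ P, ∀ A : Finset X,
      (∀ a ∈ A, a ∈ P ∧ a ≠ p ∧ dist p a ≤ r) →
      (∀ a ∈ A, ∀ b ∈ A, a ≠ b → dist a b > r) →
      A.card ≤ B)
    (S : Finset X) (hSP : S ⊆ P)
    (hSind : ∀ a ∈ S, ∀ b ∈ S, a ≠ b → dist a b > r)
    (Sstar : Finset X) (hSstarP : Sstar ⊆ P)
    (hcov : ∀ p ∈ P, p ∈ Sstar ∨ ∃ q ∈ Sstar, dist p q ≤ r) :
    S.card ≤ B * Sstar.card := by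
  classical
  set fiber : X → Finset X := fun q => S.filter (dist · q ≤ r)
  have hS_sub : S ⊆ Sstar.biUnion fiber := by
    intro s hs
    obtain ⟨q, hq, hsq⟩ : ∃ q ∈ Sstar, dist s q ≤ r := by
      rcases hcov s (hSP hs) with hs' | hcovered
      · exact ⟨s, hs', by simpa using hr⟩
      · exact hcovered
    exact Finset.mem_biUnion.mpr ⟨q, hq, Finset.mem_filter.mpr ⟨hs, hsq⟩⟩
  have hfiber : ∀ q ∈ Sstar, (fiber q).card ≤ B := fun q hq =>
    Finset.card_le_of_pairwise_dist_gt_of_dist_le hB hBound (hSstarP hq)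
      ((Finset.filter_subset _ _).trans hSP)
      (fun a ha b hb hab => hSind a (Finset.mem_filter.mp ha).1 b (Finset.mem_filter.mp hb).1 hab)
      (fun a ha => (Finset.mem_filter.mp ha).2)
  calc S.card ≤ (Sstar.biUnion fiber).card := Finset.card_le_card hS_sub
    _ ≤ ∑ q ∈ Sstar, (fiber q).card := Finset.card_biUnion_le
    _ ≤ Sstar.card • B := Finset.sum_le_card_nsmul _ _ _ hfiber
    _ = B * Sstar.card := by rw [smul_eq_mul, mul_comm]
end

section
/- Let p be a point of the Euclidean plane ℝ², r ≥ 0, and A a set of points of ℝ² such that every a ∈ A satisfies a ≠ p and d(p, a) ≤ r, and such that any two distinct points of A are at distance greater than r. Then A has at most 5 elements. -/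
/-!
Seen from `p`, two points of `A` subtend an angle greater than `π / 3`: both lie within `r` of `p`
but more than `r` apart, so by the law of cosines the cosine of that angle is below `1 / 2`. Hence
the arguments in `(-π, π]` of the points of `A` (around `p`) differ pairwise by more than `π / 3`
and, because of the wrap-around, by less than `5 * (π / 3)`. They all lie in the half-open window
of length `5 * (π / 3)` starting at the smallest one, and pigeonholing into five windows of width
`π / 3` leaves room for at most five of them.
-/

open Real Set

theorem Finset.card_le_of_subset_Ico_of_separated {s : Finset ℝ} {a d : ℝ} {n : ℕ}
    (hd : 0 < d) (hs : ∀ x ∈ s, x ∈ Set.Ico a (a + n * d))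
    (hsep : (s : Set ℝ).Pairwise fun x y => d ≤ |x - y|) : s.card ≤ n := by
  have hbucket : ∀ x ∈ s, ⌊(x - a) / d⌋₊ ∈ Finset.range n := fun x hx => by
    obtain ⟨hax, hxa⟩ := hs x hx
    rw [Finset.mem_range, Nat.floor_lt (div_nonneg (sub_nonneg.2 hax) hd.le), div_lt_iff₀ hd]
    linarith
  have hinj : InjOn (fun x => ⌊(x - a) / d⌋₊) s := fun x hx y hy hxy => by
    by_contra hne
    have hx0 : 0 ≤ (x - a) / d := div_nonneg (sub_nonneg.2 (hs x hx).1) hd.le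
    have hy0 : 0 ≤ (y - a) / d := div_nonneg (sub_nonneg.2 (hs y hy).1) hd.le
    have hxy' : (⌊(x - a) / d⌋₊ : ℝ) = ⌊(y - a) / d⌋₊ := by exact_mod_cast hxy
    have hfloor : |(x - a) / d - (y - a) / d| < 1 := by
      rw [abs_sub_lt_iff]
      constructor <;> linarith [Nat.floor_le hx0, Nat.floor_le hy0,
        Nat.lt_floor_add_one ((x - a) / d), Nat.lt_floor_add_one ((y - a) / d)]
    rw [← sub_div, sub_sub_sub_cancel_right, abs_div, abs_of_pos hd, div_lt_one hd] at hfloor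
    exact (hsep hx hy hne).not_gt hfloor
  simpa using Finset.card_le_card_of_injOn _ hbucket hinj

theorem Finset.card_le_of_separated_of_abs_sub_lt {s : Finset ℝ} {d : ℝ} {n : ℕ} (hd : 0 < d)
    (hn : n ≠ 0) (hsep : (s : Set ℝ).Pairwise fun x y => d ≤ |x - y| ∧ |x - y| < n * d) :
    s.card ≤ n := by
  rcases s.eq_empty_or_nonempty with rfl | hne
  · simp
  refine card_le_of_subset_Ico_of_separated (a := s.min' hne) hd (fun x hx => ?_)
    (hsep.mono' fun x y h => h.1)
  have hmin := s.min'_le x hx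
  refine ⟨hmin, ?_⟩
  rcases eq_or_ne x (s.min' hne) with rfl | hx'
  · have : (0 : ℝ) < n := by exact_mod_cast Nat.pos_of_ne_zero hn
    nlinarith
  · have := (hsep hx (s.min'_mem hne) hx').2
    rw [abs_of_nonneg (sub_nonneg.2 hmin)] at this
    linarith

theorem Set.encard_le_of_forall_finset_subset {α : Type*} {s : Set α} {n : ℕ}
    (h : ∀ t : Finset α, ↑t ⊆ s → t.card ≤ n) : s.encard ≤ n := by
  by_contra! hlt
  obtain ⟨t, hts, ht⟩ := exists_subset_encard_eq (Order.add_one_le_of_lt hlt)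
  obtain ⟨u, rfl⟩ := (finite_of_encard_eq_coe ht).exists_finset_coe
  have := h u hts
  rw [encard_coe_eq_coe_finsetCard] at ht
  norm_cast at ht
  omega

theorem two_mul_real_inner_lt_norm_mul_norm {E : Type*} [NormedAddCommGroup E]
    [InnerProductSpace ℝ E] {x y : E} {r : ℝ} (hx : ‖x‖ ≤ r) (hy : ‖y‖ ≤ r) (hxy : r < ‖x - y‖) :
    2 * inner ℝ x y < ‖x‖ * ‖y‖ := by
  have hr : r ^ 2 < ‖x - y‖ ^ 2 := by nlinarith [norm_nonneg x]
  rw [norm_sub_sq_real] at hr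
  nlinarith [mul_nonneg (sub_nonneg.2 hx) (sub_nonneg.2 hy),
    mul_nonneg (sub_nonneg.2 hx) (norm_nonneg x), mul_nonneg (sub_nonneg.2 hy) (norm_nonneg y)]

theorem Complex.real_inner_eq_norm_mul_norm_mul_cos_arg_sub (z w : ℂ) :
    inner ℝ z w = ‖z‖ * ‖w‖ * Real.cos (arg z - arg w) := by
  rw [Complex.inner, Real.cos_sub]
  simp only [mul_re, conj_re, conj_im]
  rw [← norm_mul_cos_arg z, ← norm_mul_cos_arg w, ← norm_mul_sin_arg z, ← norm_mul_sin_arg w]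
  ring

theorem Real.mem_Ioo_of_cos_lt_half {t : ℝ} (ht : 0 ≤ t) (ht' : t < 2 * π) (hcos : cos t < 1 / 2) :
    t ∈ Ioo (π / 3) (5 * (π / 3)) := by
  rw [← cos_pi_div_three] at hcos
  have hπ := pi_pos
  rcases le_or_gt t π with htπ | hπt
  · exact ⟨(strictAntiOn_cos.lt_iff_gt ⟨ht, htπ⟩ ⟨by linarith, by linarith⟩).1 hcos, by linarith⟩
  · rw [← cos_two_pi_sub] at hcos
    have hgap :=
      (strictAntiOn_cos.lt_iff_gt ⟨by linarith, by linarith⟩ ⟨by linarith, by linarith⟩).1 hcos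
    exact ⟨by linarith, by linarith⟩

theorem Complex.abs_arg_sub_arg_mem_Ioo {z w : ℂ} (hz : z ≠ 0) (hw : w ≠ 0)
    (hzw : 2 * inner ℝ z w < ‖z‖ * ‖w‖) : |arg z - arg w| ∈ Ioo (π / 3) (5 * (π / 3)) := by
  have hpos : 0 < ‖z‖ * ‖w‖ := by positivity
  rw [real_inner_eq_norm_mul_norm_mul_cos_arg_sub] at hzw
  refine Real.mem_Ioo_of_cos_lt_half (abs_nonneg _) ?_ ?_
  · rw [abs_sub_lt_iff]
    constructor <;> linarith [neg_pi_lt_arg z, arg_le_pi z, neg_pi_lt_arg w, arg_le_pi w]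
  · rw [Real.cos_abs]
    nlinarith

theorem euclidean_plane_at_most_five_independent_neighbors_general
    (p : EuclideanSpace ℝ (Fin 2)) (r : ℝ)
    (A : Set (EuclideanSpace ℝ (Fin 2)))
    (hA : ∀ a ∈ A, a ≠ p ∧ dist p a ≤ r)
    (hind : ∀ a ∈ A, ∀ b ∈ A, a ≠ b → dist a b > r) :
    A.encard ≤ 5 := by
  let f := Complex.orthonormalBasisOneI.repr.symm
  let θ : EuclideanSpace ℝ (Fin 2) → ℝ := fun a => Complex.arg (f (a - p))
  have hθ : A.Pairwise fun a b => |θ a - θ b| ∈ Ioo (π / 3) (5 * (π / 3)) := by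
    intro a ha b hb hab
    have hnorm : ∀ c ∈ A, ‖c - p‖ ≤ r := fun c hc => by
      rw [← dist_eq_norm, dist_comm]; exact (hA c hc).2
    have hsep : r < ‖(a - p) - (b - p)‖ := by
      rw [sub_sub_sub_cancel_right, ← dist_eq_norm]; exact hind a ha b hb hab
    refine Complex.abs_arg_sub_arg_mem_Ioo ?_ ?_ ?_
    · simpa [sub_eq_zero] using (hA a ha).1
    · simpa [sub_eq_zero] using (hA b hb).1
    · rw [LinearIsometryEquiv.inner_map_map, LinearIsometryEquiv.norm_map,
        LinearIsometryEquiv.norm_map]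
      exact two_mul_real_inner_lt_norm_mul_norm (hnorm a ha) (hnorm b hb) hsep
  have hθinj : InjOn θ A := fun a ha b hb hab => by
    by_contra hne
    have := (hθ ha hb hne).1
    rw [hab, sub_self, abs_zero] at this
    linarith [pi_pos]
  refine encard_le_of_forall_finset_subset fun s hs => ?_
  rw [← Finset.card_image_of_injOn (hθinj.mono hs)]
  refine Finset.card_le_of_separated_of_abs_sub_lt (d := π / 3) (by positivity) (by norm_num) ?_
  simp only [Finset.coe_image]
  rintro _ ⟨a, ha, rfl⟩ _ ⟨b, hb, rfl⟩ hne
  have := hθ (hs ha) (hs hb) (ne_of_apply_ne θ hne)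
  exact ⟨this.1.le, by exact_mod_cast this.2⟩

/-- In the Euclidean plane, any point `p` has at most 5 neighbors
(points at distance at most `r`, other than `p`) that are pairwise at distance
greater than `r` from each other. -/
theorem euclidean_plane_at_most_five_independent_neighbors
    (p : EuclideanSpace ℝ (Fin 2)) (r : ℝ) (hr : 0 ≤ r)
    (A : Set (EuclideanSpace ℝ (Fin 2)))
    (hA : ∀ a ∈ A, a ≠ p ∧ dist p a ≤ r)
    (hind : ∀ a ∈ A, ∀ b ∈ A, a ≠ b → dist a b > r) :
    A.encard ≤ 5 :=
  euclidean_plane_at_most_five_independent_neighbors_general p r A hA hind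
end

section
/- Let p be a point of ℝ² equipped with the Manhattan (ℓ1) distance d₁(x, y) = |x₁ − y₁| + |x₂ − y₂|, let r ≥ 0, and let A be a set of points of ℝ² such that every a ∈ A satisfies a ≠ p and d₁(p, a) ≤ r, and such that any two distinct points of A are at ℓ1-distance greater than r. Then A has at most 7 elements. -/
/-!
The linear map `a ↦ (a₁ + a₂, a₁ - a₂)` carries the ℓ1 distance to the ℓ∞ distance, whose closed
balls are squares. Cutting the closed ℓ∞-ball of radius `r` at its centre into four closed
quadrants gives four squares of side `r`, each of ℓ∞-diameter `r`; so a set of points of the ball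
that are pairwise more than `r` apart meets each quadrant at most once and has at most `4 ≤ 7`
points.
-/

/-- The Manhattan (ℓ1) distance on the plane `ℝ × ℝ`. -/
noncomputable def manhattanDist (x y : ℝ × ℝ) : ℝ := |x.1 - y.1| + |x.2 - y.2|

open Metric

section LinearOrder

variable {α : Type*} [AddCommGroup α] [LinearOrder α] [IsOrderedAddMonoid α]

theorem abs_add_abs_eq_max_abs_add_abs_sub (a b : α) : |a| + |b| = max |a + b| |a - b| := by
  grind

theorem abs_sub_le_of_le_iff_le {c s t r : α} (hs : |s - c| ≤ r) (ht : |t - c| ≤ r)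
    (hst : c ≤ s ↔ c ≤ t) : |s - t| ≤ r := by
  rw [abs_le] at hs ht
  rw [abs_sub_le_iff]
  grind

end LinearOrder

def rotate45 (a : ℝ × ℝ) : ℝ × ℝ := (a.1 + a.2, a.1 - a.2)

theorem rotate45_injective : Function.Injective rotate45 := by
  intro a b h
  simp only [rotate45, Prod.mk.injEq] at h
  ext <;> linarith [h.1, h.2]

theorem manhattanDist_eq_dist_rotate45 (x y : ℝ × ℝ) :
    manhattanDist x y = dist (rotate45 x) (rotate45 y) := by
  rw [manhattanDist, abs_add_abs_eq_max_abs_add_abs_sub, Prod.dist_eq, Real.dist_eq,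
    Real.dist_eq, rotate45, rotate45]
  congr 2 <;> ring

noncomputable def quadrant (q a : ℝ × ℝ) : Bool × Bool := (decide (q.1 ≤ a.1), decide (q.2 ≤ a.2))

theorem dist_le_of_quadrant_eq {q a b : ℝ × ℝ} {r : ℝ} (ha : a ∈ closedBall q r)
    (hb : b ∈ closedBall q r) (h : quadrant q a = quadrant q b) : dist a b ≤ r := by
  rw [mem_closedBall, Prod.dist_eq, max_le_iff, Real.dist_eq, Real.dist_eq] at ha hb
  simp only [quadrant, Prod.mk.injEq, decide_eq_decide] at h
  rw [Prod.dist_eq, max_le_iff, Real.dist_eq, Real.dist_eq]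
  exact ⟨abs_sub_le_of_le_iff_le ha.1 hb.1 h.1, abs_sub_le_of_le_iff_le ha.2 hb.2 h.2⟩

theorem encard_le_four_of_subset_closedBall {q : ℝ × ℝ} {r : ℝ} {A : Set (ℝ × ℝ)}
    (hA : A ⊆ closedBall q r) (hsep : A.Pairwise fun a b => r < dist a b) : A.encard ≤ 4 := by
  have hinj : Set.InjOn (quadrant q) A := fun a ha b hb h => by
    by_contra hab
    exact (hsep ha hb hab).not_ge (dist_le_of_quadrant_eq (hA ha) (hA hb) h)
  calc A.encard = (quadrant q '' A).encard := hinj.encard_image.symm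
    _ ≤ (Set.univ : Set (Bool × Bool)).encard := Set.encard_mono (Set.subset_univ _)
    _ = 4 := by simp [Set.encard_univ]

theorem manhattan_plane_at_most_seven_independent_neighbors_general
    (p : ℝ × ℝ) (r : ℝ)
    (A : Set (ℝ × ℝ))
    (hA : ∀ a ∈ A, a ≠ p ∧ manhattanDist p a ≤ r)
    (hind : ∀ a ∈ A, ∀ b ∈ A, a ≠ b → manhattanDist a b > r) :
    A.encard ≤ 7 := by
  have hball : rotate45 '' A ⊆ closedBall (rotate45 p) r := by
    rintro _ ⟨a, ha, rfl⟩
    rw [mem_closedBall', ← manhattanDist_eq_dist_rotate45]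
    exact (hA a ha).2
  have hsep : (rotate45 '' A).Pairwise fun a b => r < dist a b := by
    rintro _ ⟨a, ha, rfl⟩ _ ⟨b, hb, rfl⟩ hab
    rw [← manhattanDist_eq_dist_rotate45]
    exact hind a ha b hb (ne_of_apply_ne _ hab)
  calc A.encard = (rotate45 '' A).encard := (rotate45_injective.encard_image A).symm
    _ ≤ 4 := encard_le_four_of_subset_closedBall hball hsep
    _ ≤ 7 := by norm_num

/-- In the plane with the Manhattan distance, any point `p` has at
most 7 neighbors (points at ℓ1-distance at most `r`, other than `p`) that are
pairwise at ℓ1-distance greater than `r` from each other. -/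
theorem manhattan_plane_at_most_seven_independent_neighbors
    (p : ℝ × ℝ) (r : ℝ) (hr : 0 ≤ r)
    (A : Set (ℝ × ℝ))
    (hA : ∀ a ∈ A, a ≠ p ∧ manhattanDist p a ≤ r)
    (hind : ∀ a ∈ A, ∀ b ∈ A, a ≠ b → manhattanDist a b > r) :
    A.encard ≤ 7 :=
  manhattan_plane_at_most_seven_independent_neighbors_general p r A hA hind
end

section
/- Let p be a point of the Euclidean space ℝ³, r ≥ 0, and A a set of points of ℝ³ such that every a ∈ A satisfies a ≠ p and d(p, a) ≤ r, and such that any two distinct points of A are at distance greater than r. Then A has at most 24 elements. -/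
/-!
Around each neighbour `a` place the solid cone with apex `0`, axis `a - p`, half-angle `π / 6`
and height `cos (π / 6)`; it lies in the closed unit ball. By the law of cosines the angle at `p`
between two neighbours at distance `> r` exceeds `π / 3`, so by the triangle inequality for angles
their cones are disjoint. Each cone has volume `π √3 / 24` while the unit ball has volume `4π / 3`,
which leaves room for fewer than `25` cones.
-/

open MeasureTheory Metric Real InnerProductGeometry RealInnerProductSpace Set Module
open scoped ENNReal

theorem exists_linearIsometryEquiv_apply_eq {E F : Type*} [NormedAddCommGroup E]
    [InnerProductSpace ℝ E] [FiniteDimensional ℝ E] [NormedAddCommGroup F] [InnerProductSpace ℝ F]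
    [FiniteDimensional ℝ F] (hEF : finrank ℝ E = finrank ℝ F) {u : E} {v : F} (huv : ‖u‖ = ‖v‖) :
    ∃ φ : E ≃ₗᵢ[ℝ] F, φ u = v := by
  let ψ := (stdOrthonormalBasis ℝ E).equiv (stdOrthonormalBasis ℝ F) (finCongr hEF)
  exact ⟨ψ.trans (Submodule.reflection (ℝ ∙ (ψ u - v))ᗮ),
    Submodule.reflection_sub (by rw [ψ.norm_map, huv])⟩

theorem ENat.le_of_toENNReal_mul_ofReal_le {k : ℕ∞} {n : ℕ} {a b : ℝ} (ha : 0 < a)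
    (hb : b < (n + 1) * a) (h : (k : ℝ≥0∞) * ENNReal.ofReal a ≤ ENNReal.ofReal b) : k ≤ n := by
  by_contra! hlt
  have hk : ((n + 1 : ℕ) : ℝ≥0∞) ≤ k := by exact_mod_cast Order.add_one_le_of_lt hlt
  have := (mul_le_mul_left hk _).trans h
  rw [← ENNReal.ofReal_natCast, ← ENNReal.ofReal_mul (by positivity),
    ENNReal.ofReal_le_ofReal_iff'] at this
  push_cast at this
  rcases this with h' | h' <;> nlinarith

theorem cos_mul_le_iff_cos_mul_le_sin_mul {θ t s N : ℝ} (hθ0 : 0 ≤ θ) (hθ : θ < π / 2)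
    (ht : 0 < t) (hs : 0 ≤ s) (hN : 0 ≤ N) (hNts : N ^ 2 = t ^ 2 + s ^ 2) :
    cos θ * N ≤ t ↔ cos θ * s ≤ sin θ * t := by
  have hcos : 0 < cos θ := cos_pos_of_mem_Ioo ⟨by linarith, hθ⟩
  have hsin : 0 ≤ sin θ := sin_nonneg_of_nonneg_of_le_pi hθ0 (by linarith)
  have hpyth := sin_sq_add_cos_sq θ
  calc cos θ * N ≤ t ↔ (cos θ * N) ^ 2 ≤ t ^ 2 :=
        (pow_le_pow_iff_left₀ (by positivity) ht.le two_ne_zero).symm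
    _ ↔ (cos θ * s) ^ 2 ≤ (sin θ * t) ^ 2 := by
        rw [mul_pow, mul_pow, hNts]
        constructor <;> intro h <;> nlinarith
    _ ↔ cos θ * s ≤ sin θ * t := pow_le_pow_iff_left₀ (by positivity) (by positivity) two_ne_zero

theorem encard_mul_le_measure_of_pairwiseDisjoint {α ι : Type*} [MeasurableSpace α]
    (μ : Measure α) {S : Set ι} {C : ι → Set α} {B : Set α} {m : ℝ≥0∞}
    (hd : S.PairwiseDisjoint C) (hC : ∀ i ∈ S, MeasurableSet (C i))
    (hB : ∀ i ∈ S, C i ⊆ B) (hm : ∀ i ∈ S, m ≤ μ (C i)) : S.encard * m ≤ μ B :=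
  calc S.encard * m = ∑' _ : S, m := (ENNReal.tsum_set_const S m).symm
    _ ≤ ∑' i : S, μ (C i) := ENNReal.tsum_le_tsum fun i ↦ hm i i.2
    _ ≤ μ (⋃ i : S, C i) := tsum_meas_le_meas_iUnion_of_disjoint μ (fun i ↦ hC i i.2)
        fun i j hij ↦ hd i.2 j.2 (Subtype.coe_injective.ne hij)
    _ ≤ μ B := measure_mono (iUnion_subset fun i ↦ hB i i.2)

section ConeOverClosedBall

variable {F : Type*} [NormedAddCommGroup F]

def coneOverClosedBall (c h : ℝ) : Set (ℝ × F) :=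
  {q | q.1 ∈ Ioc 0 h ∧ ‖q.2‖ ≤ c * q.1}

theorem measurableSet_coneOverClosedBall [MeasurableSpace F] [OpensMeasurableSpace F]
    (c h : ℝ) : MeasurableSet (coneOverClosedBall (F := F) c h) := by
  unfold coneOverClosedBall
  measurability

theorem volume_prod_coneOverClosedBall [NormedSpace ℝ F] [FiniteDimensional ℝ F]
    [MeasurableSpace F] [BorelSpace F] (μ : Measure F) [μ.IsAddHaarMeasure] {c h : ℝ}
    (hc : 0 ≤ c) (hh : 0 ≤ h) :
    (volume.prod μ) (coneOverClosedBall c h) =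
      ENNReal.ofReal (c ^ finrank ℝ F * h ^ (finrank ℝ F + 1) / (finrank ℝ F + 1)) *
        μ (closedBall 0 1) := by
  set d := finrank ℝ F
  have hsection : ∀ t, μ (Prod.mk t ⁻¹' coneOverClosedBall c h) =
      (Ioc 0 h).indicator (fun t ↦ ENNReal.ofReal ((c * t) ^ d) * μ (closedBall 0 1)) t := by
    intro t
    by_cases ht : t ∈ Ioc 0 h
    · have : Prod.mk t ⁻¹' coneOverClosedBall c h = closedBall (0 : F) (c * t) := by
        ext y; simp [coneOverClosedBall, ht.1, ht.2]
      rw [indicator_of_mem ht, this, Measure.addHaar_closedBall' _ _ (by positivity [ht.1.le])]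
    · have : Prod.mk t ⁻¹' coneOverClosedBall (F := F) c h = ∅ :=
        eq_empty_of_forall_notMem fun _ hy ↦ ht hy.1
      rw [indicator_of_notMem ht, this, measure_empty]
  have hint : ∫ t in Ioc 0 h, (c * t) ^ d = c ^ d * h ^ (d + 1) / (d + 1) := by
    rw [← intervalIntegral.integral_of_le hh]
    simp_rw [mul_pow, intervalIntegral.integral_const_mul, integral_pow]
    ring
  rw [Measure.prod_apply (measurableSet_coneOverClosedBall c h), funext hsection,
    lintegral_indicator measurableSet_Ioc, lintegral_mul_const _ (by fun_prop),
    ← ofReal_integral_eq_lintegral_ofReal, hint]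
  · exact (continuous_const.mul continuous_id).pow d |>.integrableOn_Ioc
  · exact ae_restrict_of_forall_mem measurableSet_Ioc fun t ht ↦ by positivity [ht.1.le]

end ConeOverClosedBall

section TruncatedCone

variable {V : Type*} [NormedAddCommGroup V] [InnerProductSpace ℝ V]

theorem pi_div_three_lt_angle_of_norm_le_of_lt_norm_sub {x y : V} {r : ℝ} (hx : ‖x‖ ≤ r)
    (hy : ‖y‖ ≤ r) (hxy : r < ‖x - y‖) : π / 3 < angle x y := by
  by_contra! h
  have hcos : 1 / 2 ≤ cos (angle x y) :=
    cos_pi_div_three ▸ cos_le_cos_of_nonneg_of_le_pi (angle_nonneg x y) (by linarith [pi_pos]) h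
  have hlaw := norm_sub_sq_eq_norm_sq_add_norm_sq_sub_two_mul_norm_mul_norm_mul_cos_angle x y
  have hx0 := norm_nonneg x
  have hy0 := norm_nonneg y
  have : ‖x - y‖ ^ 2 ≤ r ^ 2 := by
    rcases le_total ‖x‖ ‖y‖ with h | h <;> nlinarith [mul_nonneg hx0 hy0]
  nlinarith [norm_nonneg (x - y)]

def truncatedCone (u : V) (θ h : ℝ) : Set V :=
  {x | angle u x ≤ θ ∧ ⟪u, x⟫ ≤ h * ‖u‖}

theorem mem_truncatedCone_iff {u x : V} (hu : u ≠ 0) {θ h t s : ℝ} (hθ0 : 0 ≤ θ)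
    (hθ : θ < π / 2) (ht : ⟪u, x⟫ = ‖u‖ * t) (hs : 0 ≤ s) (hx : ‖x‖ ^ 2 = t ^ 2 + s ^ 2) :
    x ∈ truncatedCone u θ h ↔ t ∈ Ioc 0 h ∧ s ≤ tan θ * t := by
  have hu0 : 0 < ‖u‖ := norm_pos_iff.2 hu
  have hcos : 0 < cos θ := cos_pos_of_mem_Ioo ⟨by linarith, hθ⟩
  have hproj : cos (angle u x) * ‖x‖ = t := by
    have := cos_angle_mul_norm_mul_norm u x
    rw [ht] at this
    nlinarith
  have htan : s ≤ tan θ * t ↔ cos θ * s ≤ sin θ * t := by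
    rw [tan_eq_sin_div_cos, div_mul_eq_mul_div, le_div_iff₀ hcos, mul_comm]
  have hheight : ⟪u, x⟫ ≤ h * ‖u‖ ↔ t ≤ h := by
    rw [ht, mul_comm h]; exact mul_le_mul_iff_right₀ hu0
  have hangle : angle u x ≤ θ ↔ 0 < t ∧ s ≤ tan θ * t := by
    rw [htan]
    constructor
    · intro hle
      have hx0 : x ≠ 0 := by
        rintro rfl; rw [angle_zero_right] at hle; linarith
      have hcos_le : cos θ ≤ cos (angle u x) :=
        cos_le_cos_of_nonneg_of_le_pi (angle_nonneg u x) (by linarith) hle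
      have hxpos := norm_pos_iff.2 hx0
      have htpos : 0 < t := hproj ▸ mul_pos (hcos.trans_le hcos_le) hxpos
      refine ⟨htpos, (cos_mul_le_iff_cos_mul_le_sin_mul hθ0 hθ htpos hs (norm_nonneg x) hx).1 ?_⟩
      rw [← hproj]; exact mul_le_mul_of_nonneg_right hcos_le hxpos.le
    · rintro ⟨htpos, hst⟩
      have hle := (cos_mul_le_iff_cos_mul_le_sin_mul hθ0 hθ htpos hs (norm_nonneg x) hx).2 hst
      have hxpos : 0 < ‖x‖ := by nlinarith [norm_nonneg x]
      by_contra! hlt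
      have := cos_lt_cos_of_nonneg_of_le_pi hθ0 (angle_le_pi u x) hlt
      nlinarith
  simp only [truncatedCone, mem_ofPred_eq, hangle, hheight, mem_Ioc]
  tauto

theorem disjoint_truncatedCone {u v : V} {θ h h' : ℝ} (huv : 2 * θ < angle u v) :
    Disjoint (truncatedCone u θ h) (truncatedCone v θ h') := by
  refine Set.disjoint_left.2 fun x hu hv ↦ ?_
  have := angle_le_angle_add_angle u x v
  rw [angle_comm x v] at this
  linarith [hu.1, hv.1]

theorem truncatedCone_subset_closedBall {u : V} (hu : u ≠ 0) {θ h : ℝ} (hθ : θ < π / 2) :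
    truncatedCone u θ h ⊆ closedBall 0 (h / cos θ) := by
  rintro x ⟨hangle, hheight⟩
  have hθ0 : 0 ≤ θ := (angle_nonneg u x).trans hangle
  have hcosθ : 0 < cos θ := cos_pos_of_mem_Ioo ⟨by linarith, hθ⟩
  have hcos : cos θ ≤ cos (angle u x) :=
    cos_le_cos_of_nonneg_of_le_pi (angle_nonneg u x) (by linarith) hangle
  rw [mem_closedBall, dist_zero_right, le_div_iff₀ hcosθ]
  have hu0 := norm_pos_iff.2 hu
  have key : ‖u‖ * (‖x‖ * cos θ) ≤ ‖u‖ * h := by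
    rw [← cos_angle_mul_norm_mul_norm] at hheight
    nlinarith [mul_nonneg hu0.le (norm_nonneg x)]
  exact le_of_mul_le_mul_left key hu0

theorem measurableSet_truncatedCone [MeasurableSpace V] [BorelSpace V] (u : V) (θ h : ℝ) :
    MeasurableSet (truncatedCone u θ h) := by
  unfold truncatedCone angle
  measurability

theorem volume_truncatedCone [FiniteDimensional ℝ V] [MeasurableSpace V] [BorelSpace V] {n : ℕ}
    (hV : finrank ℝ V = n + 1) {u : V} (hu : u ≠ 0) {θ h : ℝ} (hθ0 : 0 ≤ θ) (hθ : θ < π / 2)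
    (hh : 0 ≤ h) :
    volume (truncatedCone u θ h) = ENNReal.ofReal (tan θ ^ n * h ^ (n + 1) / (n + 1)) *
      volume (closedBall (0 : EuclideanSpace ℝ (Fin n)) 1) := by
  obtain ⟨φ, hφ⟩ := exists_linearIsometryEquiv_apply_eq (u := u)
    (v := WithLp.toLp 2 (‖u‖, (0 : EuclideanSpace ℝ (Fin n))))
    (by
      rw [(WithLp.linearEquiv 2 ℝ (ℝ × EuclideanSpace ℝ (Fin n))).finrank_eq]
      simp [hV, add_comm])
    (by simp)
  let ψ := fun x : V ↦ WithLp.ofLp (φ x)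
  have hψ : MeasurePreserving ψ volume (volume.prod volume) :=
    (WithLp.volume_preserving_ofLp ℝ _).comp φ.measurePreserving
  have hpre : truncatedCone u θ h = ψ ⁻¹' coneOverClosedBall (tan θ) h := by
    ext x
    refine mem_truncatedCone_iff hu hθ0 hθ ?_ (norm_nonneg _) ?_
    · simp [ψ, ← φ.inner_map_map, hφ, mul_comm]
    · rw [← φ.norm_map, WithLp.prod_norm_sq_eq_of_L2]; simp [ψ]
  rw [hpre, hψ.measure_preimage (measurableSet_coneOverClosedBall _ _).nullMeasurableSet,
    volume_prod_coneOverClosedBall _ (tan_nonneg_of_nonneg_of_le_pi_div_two hθ0 hθ.le) hh,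
    finrank_euclideanSpace_fin]

end TruncatedCone

theorem volume_truncatedCone_pi_div_six {u : EuclideanSpace ℝ (Fin 3)} (hu : u ≠ 0) :
    volume (truncatedCone u (π / 6) (cos (π / 6))) = ENNReal.ofReal (π * √3 / 24) := by
  rw [volume_truncatedCone (n := 2) (by simp) hu (by positivity) (by linarith [pi_pos])
      (cos_nonneg_of_neg_pi_div_two_le_of_le (by linarith [pi_pos]) (by linarith [pi_pos])),
    EuclideanSpace.volume_closedBall_fin_two, tan_pi_div_six, cos_pi_div_six,
    ENNReal.ofReal_one, one_pow, one_mul, ← ENNReal.ofReal_mul (by positivity)]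
  congr 1
  field_simp
  ring_nf

theorem euclidean_space_at_most_24_independent_neighbors_general
    (p : EuclideanSpace ℝ (Fin 3)) (r : ℝ)
    (A : Set (EuclideanSpace ℝ (Fin 3)))
    (hA : ∀ a ∈ A, a ≠ p ∧ dist p a ≤ r)
    (hind : ∀ a ∈ A, ∀ b ∈ A, a ≠ b → dist a b > r) :
    A.encard ≤ 24 := by
  have hπ6 : π / 6 < π / 2 := by linarith [pi_pos]
  have hnorm : ∀ a ∈ A, ‖a - p‖ ≤ r := fun a ha ↦ by
    simpa [dist_eq_norm, norm_sub_rev] using (hA a ha).2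
  have hdisj : A.PairwiseDisjoint fun a ↦ truncatedCone (a - p) (π / 6) (cos (π / 6)) :=
    fun a ha b hb hab ↦ disjoint_truncatedCone <| by
      linarith [pi_div_three_lt_angle_of_norm_le_of_lt_norm_sub (hnorm a ha) (hnorm b hb)
        (by simpa [dist_eq_norm] using hind a ha b hb hab)]
  have hball : ∀ a ∈ A, truncatedCone (a - p) (π / 6) (cos (π / 6)) ⊆ closedBall 0 1 :=
    fun a ha ↦ by
      simpa only [div_self (cos_pos_of_mem_Ioo ⟨by linarith [pi_pos], hπ6⟩).ne'] using
        truncatedCone_subset_closedBall (h := cos (π / 6)) (sub_ne_zero.2 (hA a ha).1) hπ6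
  have hle := encard_mul_le_measure_of_pairwiseDisjoint volume hdisj
    (fun _ _ ↦ measurableSet_truncatedCone _ _ _) hball
    (fun a ha ↦ (volume_truncatedCone_pi_div_six (sub_ne_zero.2 (hA a ha).1)).ge)
  rw [EuclideanSpace.volume_closedBall_fin_three, ENNReal.ofReal_one, one_pow, one_mul] at hle
  have hsqrt3 : (1.28 : ℝ) < √3 := by
    rw [lt_sqrt (by norm_num)]; norm_num
  exact ENat.le_of_toENNReal_mul_ofReal_le (by positivity) (by push_cast; nlinarith [pi_pos]) hle

/-- In Euclidean 3-dimensional space, any point `p` has at most 24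
neighbors (points at distance at most `r`, other than `p`) that are pairwise at
distance greater than `r` from each other. -/
theorem euclidean_space_at_most_24_independent_neighbors
    (p : EuclideanSpace ℝ (Fin 3)) (r : ℝ) (hr : 0 ≤ r)
    (A : Set (EuclideanSpace ℝ (Fin 3)))
    (hA : ∀ a ∈ A, a ≠ p ∧ dist p a ≤ r)
    (hind : ∀ a ∈ A, ∀ b ∈ A, a ≠ b → dist a b > r) :
    A.encard ≤ 24 :=
  euclidean_space_at_most_24_independent_neighbors_general p r A hA hind
end

section
/- Let (X, d) be a metric space, P a finite subset of X, and 0 ≤ r′ ≤ r. Let S ⊆ P satisfy the r-coverage condition on P, and let M be a positive integer such that for every p ∈ S, every r′-independent set of points of P lying at distance at most r from p has at most M elements. Then every r′-independent subset S′ of P satisfies |S′| ≤ M · |S|. (This captures the size bound for zooming-in: an r′-DisC diverse subset S^{r′} obtained by extending an r-DisC diverse subset S^r satisfies |S^{r′}| ≤ M · |S^r|.) -/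
/-! Send each point of `S'` to a point of `S` within distance `r` of it. The fibre over `q ∈ S`
is an `r'`-independent set of points of `P` within distance `r` of `q`, so it has at most `M`
points; double counting the pairs then gives `|S'| ≤ M · |S|`. -/

open Finset

theorem card_le_mul_card_of_forall_exists_dist_le {X : Type*} [PseudoMetricSpace X]
    {S T : Finset X} {r : ℝ} {M : ℕ} (hcov : ∀ p ∈ T, ∃ q ∈ S, dist p q ≤ r)
    (hfibre : ∀ q ∈ S, #{p ∈ T | dist p q ≤ r} ≤ M) : #T ≤ M * #S := by
  classical
  have hdouble := card_mul_le_card_mul (fun p q : X => dist p q ≤ r) (m := 1)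
    (fun p hp => one_le_card.2 <| by simpa [Finset.Nonempty, and_comm] using hcov p hp) hfibre
  linarith

theorem exists_mem_dist_le_of_coverage {X : Type*} [PseudoMetricSpace X] {P S : Finset X}
    {r : ℝ} (hr : 0 ≤ r) (hcov : ∀ p ∈ P, p ∈ S ∨ ∃ q ∈ S, dist p q ≤ r) :
    ∀ p ∈ P, ∃ q ∈ S, dist p q ≤ r := fun p hp =>
  (hcov p hp).elim (fun hpS => ⟨p, hpS, by rwa [dist_self]⟩) id

theorem zoom_in_size_bound_general {X : Type*} [MetricSpace X] (P : Finset X)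
    (r r' : ℝ) (hr' : 0 ≤ r') (hr'r : r' ≤ r)
    (S : Finset X)
    (hcov : ∀ p ∈ P, p ∈ S ∨ ∃ q ∈ S, dist p q ≤ r)
    (M : ℕ)
    (hBound : ∀ p ∈ S, ∀ A : Finset X,
      (∀ a ∈ A, a ∈ P ∧ dist p a ≤ r) →
      (∀ a ∈ A, ∀ b ∈ A, a ≠ b → dist a b > r') →
      A.card ≤ M)
    (S' : Finset X) (hS'P : S' ⊆ P)
    (hS'ind : ∀ a ∈ S', ∀ b ∈ S', a ≠ b → dist a b > r') :
    S'.card ≤ M * S.card := by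
  have hcovS' : ∀ p ∈ S', ∃ q ∈ S, dist p q ≤ r := fun p hp =>
    exists_mem_dist_le_of_coverage (hr'.trans hr'r) hcov p (hS'P hp)
  refine card_le_mul_card_of_forall_exists_dist_le hcovS' fun q hq => hBound q hq _ ?_ ?_
  · intro a ha
    rw [mem_filter] at ha
    exact ⟨hS'P ha.1, dist_comm q a ▸ ha.2⟩
  · intro a ha b hb
    exact hS'ind a (mem_filter.1 ha).1 b (mem_filter.1 hb).1

/-- Zooming-in size bound. In a metric space, let `S ⊆ P` satisfy
the `r`-coverage condition on `P`, let `0 ≤ r' ≤ r`, and let `M > 0` be such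
that for every `p ∈ S`, every `r'`-independent set of points of `P` lying at
distance at most `r` from `p` has at most `M` elements. Then every
`r'`-independent subset `S'` of `P` satisfies `|S'| ≤ M * |S|`. -/
theorem zoom_in_size_bound {X : Type*} [MetricSpace X] (P : Finset X)
    (r r' : ℝ) (hr' : 0 ≤ r') (hr'r : r' ≤ r)
    (S : Finset X) (hSP : S ⊆ P)
    (hcov : ∀ p ∈ P, p ∈ S ∨ ∃ q ∈ S, dist p q ≤ r)
    (M : ℕ) (hM : 0 < M)
    (hBound : ∀ p ∈ S, ∀ A : Finset X,
      (∀ a ∈ A, a ∈ P ∧ dist p a ≤ r) →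
      (∀ a ∈ A, ∀ b ∈ A, a ≠ b → dist a b > r') →
      A.card ≤ M)
    (S' : Finset X) (hS'P : S' ⊆ P)
    (hS'ind : ∀ a ∈ S', ∀ b ∈ S', a ≠ b → dist a b > r') :
    S'.card ≤ M * S.card :=
  zoom_in_size_bound_general P r r' hr' hr'r S hcov M hBound S' hS'P hS'ind
end

section
/- Let (X, d) be a metric space, P a finite subset of X, r ≥ 0, and S an r-DisC diverse subset of P with |S| ≥ 2. Let λ be the minimum distance between two distinct points of S (so λ > r). Then for every subset S* ⊆ P with |S*| = |S|, the minimum distance λ* between two distinct points of S* satisfies λ* ≤ 3λ. -/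
/-!
Send every point of `S*` to a point of `S` within distance `λ` (itself, or a covering point at
distance `≤ r < λ`). If two points of `S*` share an image, they are within `2λ` of each other.
Otherwise the map is a bijection onto `S`, so the two points of `S` realising `λ` have preimages
in `S*`, which are within `λ + λ + λ` of each other.
-/

open Finset

theorem exists_ne_dist_le_of_forall_exists_dist_le {X : Type*} [PseudoMetricSpace X]
    {S T : Finset X} (hcard : #S ≤ #T) {ρ : ℝ} (hnear : ∀ t ∈ T, ∃ s ∈ S, dist t s ≤ ρ)
    {x y : X} (hx : x ∈ S) (hy : y ∈ S) (hxy : x ≠ y) :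
    ∃ t ∈ T, ∃ t' ∈ T, t ≠ t' ∧ dist t t' ≤ ρ + dist x y + ρ := by
  choose g hgS hgd using hnear
  by_cases hinj : ∀ t t' ht ht', g t ht = g t' ht' → t = t'
  · obtain ⟨t, ht, rfl⟩ := surj_on_of_inj_on_of_card_le g hgS hinj hcard x hx
    obtain ⟨t', ht', rfl⟩ := surj_on_of_inj_on_of_card_le g hgS hinj hcard y hy
    refine ⟨t, ht, t', ht', fun h => hxy (by subst h; rfl), ?_⟩
    calc dist t t' ≤ dist t (g t ht) + dist (g t ht) (g t' ht') + dist (g t' ht') t' :=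
          dist_triangle4 _ _ _ _
      _ ≤ ρ + dist (g t ht) (g t' ht') + ρ := by
          gcongr
          · exact hgd t ht
          · rw [dist_comm]; exact hgd t' ht'
  · push Not at hinj
    obtain ⟨t, t', ht, ht', hg, hne⟩ := hinj
    refine ⟨t, ht, t', ht', hne, ?_⟩
    calc dist t t' ≤ dist t (g t ht) + dist (g t' ht') t' := by
          rw [← hg]; exact dist_triangle _ _ _
      _ ≤ ρ + ρ := by
          gcongr
          · exact hgd t ht
          · rw [dist_comm]; exact hgd t' ht'
      _ ≤ ρ + dist x y + ρ := by linarith [dist_nonneg (x := x) (y := y)]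

theorem disc_maxmin_bound_general {X : Type*} [MetricSpace X] (P : Finset X)
    (r : ℝ)
    (S : Finset X)
    (hcov : ∀ p ∈ P, p ∈ S ∨ ∃ q ∈ S, dist p q ≤ r)
    (hind : ∀ a ∈ S, ∀ b ∈ S, a ≠ b → dist a b > r)
    (lam : ℝ)
    (hlam : IsLeast {d : ℝ | ∃ x ∈ S, ∃ y ∈ S, x ≠ y ∧ d = dist x y} lam) :
    r < lam ∧
      ∀ Sstar : Finset X, Sstar ⊆ P → Sstar.card = S.card →
        ∀ lamstar : ℝ,
          IsLeast {d : ℝ | ∃ x ∈ Sstar, ∃ y ∈ Sstar, x ≠ y ∧ d = dist x y}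
            lamstar →
          lamstar ≤ 3 * lam := by
  obtain ⟨⟨x, hx, y, hy, hxy, rfl⟩, -⟩ := hlam
  have hr : r < dist x y := hind x hx y hy hxy
  refine ⟨hr, fun Sstar hSstarP hcard lamstar hlamstar => ?_⟩
  have hnear : ∀ p ∈ Sstar, ∃ q ∈ S, dist p q ≤ dist x y := fun p hp =>
    (hcov p (hSstarP hp)).elim (fun hpS => ⟨p, hpS, by simp⟩)
      fun ⟨q, hq, hpq⟩ => ⟨q, hq, hpq.trans hr.le⟩
  obtain ⟨t, ht, t', ht', htt', hdist⟩ :=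
    exists_ne_dist_le_of_forall_exists_dist_le hcard.ge hnear hx hy hxy
  calc lamstar ≤ dist t t' := hlamstar.2 ⟨t, ht, t', ht', htt', rfl⟩
    _ ≤ 3 * dist x y := by linarith

/-- Let `S` be an `r`-DisC diverse subset of `P` with `|S| ≥ 2`
and let `λ` be the minimum pairwise distance of `S` (so `λ > r`). Then for
every `S* ⊆ P` with `|S*| = |S|`, the minimum pairwise distance `λ*` of `S*`
satisfies `λ* ≤ 3 λ`. -/
theorem disc_maxmin_bound {X : Type*} [MetricSpace X] (P : Finset X)
    (r : ℝ) (hr : 0 ≤ r)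
    (S : Finset X) (hSP : S ⊆ P) (hS2 : 2 ≤ S.card)
    (hcov : ∀ p ∈ P, p ∈ S ∨ ∃ q ∈ S, dist p q ≤ r)
    (hind : ∀ a ∈ S, ∀ b ∈ S, a ≠ b → dist a b > r)
    (lam : ℝ)
    (hlam : IsLeast {d : ℝ | ∃ x ∈ S, ∃ y ∈ S, x ≠ y ∧ d = dist x y} lam) :
    r < lam ∧
      ∀ Sstar : Finset X, Sstar ⊆ P → Sstar.card = S.card →
        ∀ lamstar : ℝ,
          IsLeast {d : ℝ | ∃ x ∈ Sstar, ∃ y ∈ Sstar, x ≠ y ∧ d = dist x y}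
            lamstar →
          lamstar ≤ 3 * lam :=
  disc_maxmin_bound_general P r S hcov hind lam hlam
end

section
/- Let G be a finite simple graph with maximum degree Δ. Let v₁, …, v_m be a sequence of distinct vertices constructed greedily: for each i, the vertex v_{i+1} is chosen so that its closed neighborhood contains the maximum possible number of vertices not contained in the union of the closed neighborhoods of v₁, …, v_i (and this number is positive), and the process stops exactly when {v₁, …, v_m} is a dominating set of G. Then for every dominating set D of G (in particular for a minimum independent dominating set), m ≤ H(Δ + 1) · |D|, where H(n) = Σ_{k=1}^{n} 1/k is the n-th harmonic number. -/
/-!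
Charge every greedy step a unit price, shared equally by the vertices it newly covers, so the
total price is `m`. Fix `u ∈ D`: when a vertex of `N[u]` gets covered, say with `r` vertices of
`N[u]` (itself included) covered at that step or later, all `r` were still uncovered, so choosing
`u` would have covered at least `r` new vertices and greediness makes the vertex pay at most
`1/r`. Hence `N[u]` pays at most `H(|N[u]|) ≤ H(Δ + 1)` in total, and the sets `N[u]`, `u ∈ D`,
cover everything.
-/

open Finset

theorem sum_inv_card_filter_le_le_harmonic {ι κ : Type*} [DecidableEq ι] [LinearOrder κ]
    (f : ι → κ) (s : Finset ι) :
    ∑ x ∈ s, (#{y ∈ s | f x ≤ f y} : ℚ)⁻¹ ≤ harmonic #s := by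
  induction s using Finset.induction_on_min_value f with
  | empty => simp
  | insert a s ha hmin ih =>
    have hfirst : {y ∈ insert a s | f a ≤ f y} = insert a s :=
      filter_true_of_mem fun y hy => (mem_insert.mp hy).elim (fun h => h ▸ le_rfl) (hmin y)
    have hrest : ∀ x ∈ s,
        (#{y ∈ insert a s | f x ≤ f y} : ℚ)⁻¹ ≤ (#{y ∈ s | f x ≤ f y} : ℚ)⁻¹ :=
      fun x hx => inv_anti₀ (mod_cast card_pos.mpr ⟨x, mem_filter.mpr ⟨hx, le_rfl⟩⟩)
        (mod_cast card_le_card (filter_subset_filter _ (subset_insert a s)))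
    rw [sum_insert ha, hfirst, card_insert_of_notMem ha, harmonic_succ, add_comm]
    push_cast
    gcongr
    exact (sum_le_sum hrest).trans ih

theorem harmonic_mono : Monotone harmonic :=
  monotone_nat_of_le_succ fun n => by
    rw [harmonic_succ]
    exact le_add_of_nonneg_right (by positivity)

section GreedyCover

variable {α β : Type*} [DecidableEq β] (N : α → Finset β) {m : ℕ} (v : Fin m → α)

def coveredBefore (i : Fin m) : Finset β := (Iio i).biUnion fun j => N (v j)

def newlyCovered (i : Fin m) : Finset β := N (v i) \ coveredBefore N v i

variable {N v}

theorem mem_coveredBefore_of_lt {i j : Fin m} {x : β} (hji : j < i) (hx : x ∈ N (v j)) :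
    x ∈ coveredBefore N v i :=
  mem_biUnion.mpr ⟨j, mem_Iio.mpr hji, hx⟩

theorem notMem_coveredBefore_of_le {i j : Fin m} {x : β} (hij : i ≤ j)
    (hx : x ∈ newlyCovered N v j) : x ∉ coveredBefore N v i := fun hxi =>
  (mem_sdiff.mp hx).2 (biUnion_subset_biUnion_of_subset_left _ (Iio_subset_Iio hij) hxi)

theorem exists_mem_newlyCovered {i : Fin m} {x : β} (hx : x ∈ N (v i)) :
    ∃ j, x ∈ newlyCovered N v j := by
  obtain ⟨j, hj, hmin⟩ :=
    exists_min_image {k | x ∈ N (v k)} id ⟨i, mem_filter.mpr ⟨mem_univ i, hx⟩⟩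
  refine ⟨j, mem_sdiff.mpr ⟨(mem_filter.mp hj).2, fun hxj => ?_⟩⟩
  obtain ⟨k, hk, hxk⟩ := mem_biUnion.mp hxj
  exact (mem_Iio.mp hk).not_ge (hmin k (mem_filter.mpr ⟨mem_univ k, hxk⟩))

theorem eq_of_mem_newlyCovered {i j : Fin m} {x : β} (hi : x ∈ newlyCovered N v i)
    (hj : x ∈ newlyCovered N v j) : i = j := by
  by_contra hne
  rcases lt_or_gt_of_ne hne with hij | hji
  · exact notMem_coveredBefore_of_le le_rfl hj (mem_coveredBefore_of_lt hij (mem_sdiff.mp hi).1)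
  · exact notMem_coveredBefore_of_le le_rfl hi (mem_coveredBefore_of_lt hji (mem_sdiff.mp hj).1)

theorem sum_inv_card_newlyCovered [Fintype β] (hpos : ∀ i, 0 < #(newlyCovered N v i))
    (ι : β → Fin m) (hι : ∀ x, x ∈ newlyCovered N v (ι x)) :
    ∑ x, (#(newlyCovered N v (ι x)) : ℚ)⁻¹ = m := by
  have hfiber : ∀ i, ({x | ι x = i} : Finset β) = newlyCovered N v i := fun i => by
    ext x
    simp only [mem_filter, mem_univ, true_and]
    exact ⟨fun h => h ▸ hι x, fun hx => eq_of_mem_newlyCovered (hι x) hx⟩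
  rw [← sum_fiberwise univ ι]
  calc ∑ i, ∑ x ∈ {x | ι x = i}, (#(newlyCovered N v (ι x)) : ℚ)⁻¹
      = ∑ i : Fin m, 1 := sum_congr rfl fun i _ => by
        rw [sum_congr rfl fun x hx => by rw [(mem_filter.mp hx).2], sum_const, hfiber,
          nsmul_eq_mul, mul_inv_cancel₀ (mod_cast (hpos i).ne')]
    _ = m := by simp

theorem sum_inv_card_newlyCovered_le_harmonic
    (hgreedy : ∀ i u, #(N u \ coveredBefore N v i) ≤ #(newlyCovered N v i))
    (ι : β → Fin m) (hι : ∀ x, x ∈ newlyCovered N v (ι x)) (u : α) :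
    ∑ x ∈ N u, (#(newlyCovered N v (ι x)) : ℚ)⁻¹ ≤ harmonic #(N u) := by
  refine le_trans (sum_le_sum fun x hx => ?_) (sum_inv_card_filter_le_le_harmonic ι (N u))
  have hlater : {y ∈ N u | ι x ≤ ι y} ⊆ N u \ coveredBefore N v (ι x) := fun y hy => by
    obtain ⟨hyu, hxy⟩ := mem_filter.mp hy
    exact mem_sdiff.mpr ⟨hyu, notMem_coveredBefore_of_le hxy (hι y)⟩
  exact inv_anti₀ (mod_cast card_pos.mpr ⟨x, mem_filter.mpr ⟨hx, le_rfl⟩⟩)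
    (mod_cast (card_le_card hlater).trans (hgreedy (ι x) u))

theorem card_le_sum_harmonic_of_greedy [Fintype β]
    (hgreedy : ∀ i u, #(N u \ coveredBefore N v i) ≤ #(newlyCovered N v i))
    (hpos : ∀ i, 0 < #(newlyCovered N v i)) (hcover : ∀ x, ∃ i, x ∈ N (v i))
    (D : Finset α) (hD : ∀ x, ∃ u ∈ D, x ∈ N u) :
    (m : ℚ) ≤ ∑ u ∈ D, harmonic #(N u) := by
  classical
  choose ι hι using fun x => (hcover x).elim fun _ => exists_mem_newlyCovered
  choose d hdD hdN using hD
  rw [← sum_inv_card_newlyCovered hpos ι hι, ← sum_fiberwise_of_maps_to fun x _ => hdD x]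
  refine sum_le_sum fun u _ => le_trans ?_ (sum_inv_card_newlyCovered_le_harmonic hgreedy ι hι u)
  exact sum_le_sum_of_subset_of_nonneg (fun x hx => (mem_filter.mp hx).2 ▸ hdN x)
    fun _ _ _ => by positivity

end GreedyCover

def SimpleGraph.closedNeighborFinset {V : Type*} [DecidableEq V] (G : SimpleGraph V)
    [G.LocallyFinite] (u : V) : Finset V :=
  insert u (G.neighborFinset u)

theorem SimpleGraph.card_closedNeighborFinset {V : Type*} [DecidableEq V] (G : SimpleGraph V)
    [G.LocallyFinite] (u : V) : #(G.closedNeighborFinset u) = G.degree u + 1 := by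
  rw [closedNeighborFinset, card_insert_of_notMem (G.notMem_neighborFinset_self u),
    card_neighborFinset_eq_degree]

theorem greedy_dominating_set_bound_general {V : Type*} [Fintype V] [DecidableEq V]
    (G : SimpleGraph V) [DecidableRel G.Adj]
    (m : ℕ) (v : Fin m → V)
    (hgreedy : ∀ i : Fin m, ∀ u : V,
      ((insert u (G.neighborFinset u)) \
          (Finset.Iio i).biUnion (fun j => insert (v j) (G.neighborFinset (v j)))).card ≤
        ((insert (v i) (G.neighborFinset (v i))) \
          (Finset.Iio i).biUnion (fun j => insert (v j) (G.neighborFinset (v j)))).card)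
    (hpos : ∀ i : Fin m,
      0 < ((insert (v i) (G.neighborFinset (v i))) \
          (Finset.Iio i).biUnion (fun j => insert (v j) (G.neighborFinset (v j)))).card)
    (hdom : ∀ x : V, ∃ i : Fin m, x ∈ insert (v i) (G.neighborFinset (v i)))
    (D : Finset V) (hD : ∀ x : V, ∃ u ∈ D, x ∈ insert u (G.neighborFinset u)) :
    (m : ℝ) ≤ (∑ k ∈ Finset.Icc 1 (G.maxDegree + 1), (1 : ℝ) / k) * D.card := by
  have hsum : (m : ℚ) ≤ ∑ u ∈ D, harmonic #(G.closedNeighborFinset u) :=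
    card_le_sum_harmonic_of_greedy hgreedy hpos hdom D hD
  have hdeg : ∀ u ∈ D, harmonic #(G.closedNeighborFinset u) ≤ harmonic (G.maxDegree + 1) :=
    fun u _ => harmonic_mono (by
      rw [G.card_closedNeighborFinset]; exact Nat.succ_le_succ (G.degree_le_maxDegree u))
  have hbound := hsum.trans (sum_le_card_nsmul D _ _ hdeg)
  rw [nsmul_eq_mul, mul_comm] at hbound
  rw [show ∑ k ∈ Icc 1 (G.maxDegree + 1), (1 : ℝ) / k = harmonic (G.maxDegree + 1) by
    simp only [harmonic_eq_sum_Icc, Rat.cast_sum, Rat.cast_inv, Rat.cast_natCast, one_div]]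
  exact_mod_cast hbound

/-- Greedy set-cover style bound for dominating sets. Let `G` be
a finite simple graph with maximum degree `Δ` and let `v 0, …, v (m-1)` be a
sequence of distinct vertices chosen greedily: each `v i` covers (via its
closed neighborhood) the maximum possible number of vertices not yet covered by
the closed neighborhoods of the previously chosen vertices, this number being
positive, and the process stops exactly when the chosen vertices form a
dominating set. Then for every dominating set `D` of `G`,
`m ≤ H(Δ + 1) * |D|`, where `H` is the harmonic number. -/
theorem greedy_dominating_set_bound {V : Type*} [Fintype V] [DecidableEq V]
    (G : SimpleGraph V) [DecidableRel G.Adj]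
    (m : ℕ) (v : Fin m → V) (hv : Function.Injective v)
    (hgreedy : ∀ i : Fin m, ∀ u : V,
      ((insert u (G.neighborFinset u)) \
          (Finset.Iio i).biUnion (fun j => insert (v j) (G.neighborFinset (v j)))).card ≤
        ((insert (v i) (G.neighborFinset (v i))) \
          (Finset.Iio i).biUnion (fun j => insert (v j) (G.neighborFinset (v j)))).card)
    (hpos : ∀ i : Fin m,
      0 < ((insert (v i) (G.neighborFinset (v i))) \
          (Finset.Iio i).biUnion (fun j => insert (v j) (G.neighborFinset (v j)))).card)
    (hdom : ∀ x : V, ∃ i : Fin m, x ∈ insert (v i) (G.neighborFinset (v i)))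
    (D : Finset V) (hD : ∀ x : V, ∃ u ∈ D, x ∈ insert u (G.neighborFinset u)) :
    (m : ℝ) ≤ (∑ k ∈ Finset.Icc 1 (G.maxDegree + 1), (1 : ℝ) / k) * D.card :=
  greedy_dominating_set_bound_general G m v hgreedy hpos hdom D hD
end

section
/- Let P be a finite subset of the Euclidean plane ℝ² and r ≥ 0. Then every r-independent subset S of P and every subset S* of P satisfying the r-coverage condition on P satisfy |S| ≤ 5 · |S*|. In particular, in the Euclidean plane any r-DisC diverse subset of P is at most 5 times larger than a minimum r-DisC diverse subset of P. -/
/-!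
Around a point `q` of the plane, any two points of an `r`-independent set lying in the closed
disc of radius `r` about `q` subtend an angle greater than `π / 3` at `q` (law of cosines), so
the disc holds at most five of them: the sorted arguments of six such points would spread over
more than `5π / 3`, bringing the first and the last within `π / 3` of each other around the
circle. Every point of an `r`-independent set `S` lies in such a disc around some point of an
`r`-covering set `S*`, hence `|S| ≤ 5 |S*|`.
-/

open Real Finset InnerProductGeometry EuclideanGeometry Module

theorem Finset.card_sub_one_nsmul_le_max'_sub_min' {α : Type*} [AddCommGroup α] [LinearOrder α]
    [IsOrderedAddMonoid α] {c : α} (s : Finset α) (hs : s.Nonempty)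
    (h : ∀ x ∈ s, ∀ y ∈ s, x < y → c ≤ y - x) :
    (#s - 1) • c ≤ s.max' hs - s.min' hs := by
  induction s using Finset.induction_on_max with
  | empty => exact absurd hs Finset.not_nonempty_empty
  | insert a s hlt ih =>
    rcases s.eq_empty_or_nonempty with rfl | hne
    · simp
    have ha : a ∉ s := fun h' => lt_irrefl a (hlt a h')
    have hmax : (insert a s).max' hs = a := by
      rw [max'_insert _ _ hne, max_eq_left (hlt _ (s.max'_mem hne)).le]
    have hmin : (insert a s).min' hs = s.min' hne := by
      rw [min'_insert _ _ hne, min_eq_right (hlt _ (s.min'_mem hne)).le]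
    have hlast : c ≤ a - s.max' hne :=
      h _ (mem_insert_of_mem (s.max'_mem hne)) _ (mem_insert_self a s) (hlt _ (s.max'_mem hne))
    have hinit := ih hne fun x hx y hy => h x (mem_insert_of_mem hx) y (mem_insert_of_mem hy)
    rw [card_insert_of_notMem ha, hmax, hmin, Nat.add_sub_cancel,
      ← Nat.sub_add_cancel hne.card_pos, succ_nsmul]
    calc (#s - 1) • c + c ≤ (s.max' hne - s.min' hne) + (a - s.max' hne) := add_le_add hinit hlast
      _ = a - s.min' hne := by abel

theorem Real.pi_div_three_lt_and_lt_five_mul_pi_div_three_of_cos_lt {t : ℝ} (h0 : 0 ≤ t)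
    (h2π : t < 2 * π) (h : cos t < 1 / 2) : π / 3 < t ∧ t < 5 * π / 3 := by
  have hπ := pi_pos
  constructor
  · by_contra! hle
    have := cos_le_cos_of_nonneg_of_le_pi h0 (by linarith) hle
    rw [cos_pi_div_three] at this
    linarith
  · by_contra! hge
    have := cos_le_cos_of_nonneg_of_le_pi (x := 2 * π - t) (y := π / 3) (by linarith) (by linarith)
      (by linarith)
    rw [cos_pi_div_three, cos_two_pi_sub] at this
    linarith

theorem Real.card_le_five_of_cos_sub_lt (A : Finset ℝ) (hA : ∀ x ∈ A, x ∈ Set.Ioc (-π) π)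
    (h : ∀ x ∈ A, ∀ y ∈ A, x ≠ y → cos (y - x) < 1 / 2) : #A ≤ 5 := by
  rcases A.eq_empty_or_nonempty with rfl | hne
  · simp
  have hsep : ∀ x ∈ A, ∀ y ∈ A, x < y → π / 3 < y - x ∧ y - x < 5 * π / 3 := by
    intro x hx y hy hxy
    obtain ⟨hx₁, hx₂⟩ := hA x hx
    obtain ⟨hy₁, hy₂⟩ := hA y hy
    exact pi_div_three_lt_and_lt_five_mul_pi_div_three_of_cos_lt (by linarith) (by linarith)
      (h x hx y hy hxy.ne)
  have hwidth : A.max' hne - A.min' hne < 5 * π / 3 := by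
    rcases (A.min'_le _ (A.max'_mem hne)).lt_or_eq with hlt | heq
    · exact (hsep _ (A.min'_mem hne) _ (A.max'_mem hne) hlt).2
    · rw [heq, sub_self]
      positivity
  have hgaps := A.card_sub_one_nsmul_le_max'_sub_min' hne
    fun x hx y hy hxy => (hsep x hx y hy hxy).1.le
  rw [nsmul_eq_mul, Nat.cast_sub hne.card_pos] at hgaps
  have : (#A : ℝ) < 6 := by nlinarith [pi_pos]
  exact_mod_cast Nat.lt_succ_iff.1 (by exact_mod_cast this)

theorem EuclideanGeometry.cos_angle_lt_of_dist_le_of_lt_dist {V P : Type*}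
    [NormedAddCommGroup V] [InnerProductSpace ℝ V] [MetricSpace P] [NormedAddTorsor V P]
    {a b q : P} {r : ℝ} (ha : dist a q ≤ r) (hb : dist b q ≤ r) (hab : r < dist a b) :
    cos (∠ a q b) < 1 / 2 := by
  have hcos := dist_sq_eq_dist_sq_add_dist_sq_sub_two_mul_dist_mul_dist_mul_cos_angle a q b
  have ha₀ := dist_nonneg (x := a) (y := q)
  have hb₀ := dist_nonneg (x := b) (y := q)
  have hr : r * r < dist a b * dist a b := mul_self_lt_mul_self (ha₀.trans ha) hab
  have key : 2 * (dist a q * dist b q) * cos (∠ a q b) < dist a q * dist b q := by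
    rcases le_total (dist a q) (dist b q) with hle | hle <;> nlinarith
  nlinarith [mul_nonneg ha₀ hb₀]

theorem Complex.cos_angle_eq_cos_arg_sub_arg {x y : ℂ} (hx : x ≠ 0) (hy : y ≠ 0) :
    Real.cos (angle x y) = Real.cos (x.arg - y.arg) := by
  rw [angle_eq_abs_arg hx hy, cos_abs, ← Real.Angle.cos_coe, arg_div_coe_angle hx hy,
    ← Real.Angle.coe_sub, Real.Angle.cos_coe]

theorem Complex.card_le_five_of_dist_le_of_lt_dist {T : Finset ℂ} {q : ℂ} {r : ℝ}
    (hnear : ∀ t ∈ T, dist t q ≤ r) (hsep : ∀ a ∈ T, ∀ b ∈ T, a ≠ b → r < dist a b) :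
    #T ≤ 5 := by
  by_cases hq : q ∈ T
  · have hsub : T ⊆ {q} := fun t ht =>
      mem_singleton.2 (by_contra fun htq => (hnear t ht).not_gt (hsep t ht q hq htq))
    exact (card_le_card hsub).trans (by simp)
  have hne : ∀ t ∈ T, t - q ≠ 0 := fun t ht => sub_ne_zero.2 (ne_of_mem_of_not_mem ht hq)
  have hcos : ∀ a ∈ T, ∀ b ∈ T, a ≠ b → Real.cos ((b - q).arg - (a - q).arg) < 1 / 2 := by
    intro a ha b hb hab
    rw [← cos_angle_eq_cos_arg_sub_arg (hne b hb) (hne a ha)]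
    have hangle : Real.cos (∠ b q a) < 1 / 2 := cos_angle_lt_of_dist_le_of_lt_dist (hnear b hb)
      (hnear a ha) (by rw [dist_comm]; exact hsep a ha b hb hab)
    rwa [EuclideanGeometry.angle, vsub_eq_sub, vsub_eq_sub] at hangle
  have hinj : Set.InjOn (fun t => (t - q).arg) T := by
    intro a ha b hb hab
    by_contra h
    have hlt := hcos a ha b hb h
    rw [show (b - q).arg = (a - q).arg from hab.symm, sub_self, Real.cos_zero] at hlt
    norm_num at hlt
  rw [← card_image_of_injOn hinj]
  refine Real.card_le_five_of_cos_sub_lt _ ?_ ?_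
  · simp only [mem_image]
    rintro _ ⟨t, -, rfl⟩
    exact ⟨neg_pi_lt_arg _, arg_le_pi _⟩
  · simp only [mem_image]
    rintro _ ⟨a, ha, rfl⟩ _ ⟨b, hb, rfl⟩ hab
    exact hcos a ha b hb fun h => hab (h ▸ rfl)

theorem card_le_five_of_dist_le_of_lt_dist {E : Type*} [NormedAddCommGroup E]
    [InnerProductSpace ℝ E] (hE : finrank ℝ E = 2) {T : Finset E} {q : E} {r : ℝ}
    (hnear : ∀ t ∈ T, dist t q ≤ r) (hsep : ∀ a ∈ T, ∀ b ∈ T, a ≠ b → r < dist a b) :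
    #T ≤ 5 := by
  have : FiniteDimensional ℝ E := Module.finite_of_finrank_eq_succ hE
  let e : E ≃ₗᵢ[ℝ] ℂ :=
    (Complex.isometryOfOrthonormal ((stdOrthonormalBasis ℝ E).reindex (finCongr hE))).symm
  rw [← card_image_of_injective T e.injective]
  refine Complex.card_le_five_of_dist_le_of_lt_dist (q := e q) (r := r) ?_ ?_
  · simpa [e.dist_map] using hnear
  · simp only [mem_image]
    rintro _ ⟨a, ha, rfl⟩ _ ⟨b, hb, rfl⟩ hab
    rw [e.dist_map]
    exact hsep a ha b hb fun h => hab (h ▸ rfl)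

theorem disc_size_bound_plane_general (P : Finset (EuclideanSpace ℝ (Fin 2)))
    (r : ℝ) (hr : 0 ≤ r)
    (S : Finset (EuclideanSpace ℝ (Fin 2))) (hSP : S ⊆ P)
    (hSind : ∀ a ∈ S, ∀ b ∈ S, a ≠ b → dist a b > r)
    (Sstar : Finset (EuclideanSpace ℝ (Fin 2)))
    (hcov : ∀ p ∈ P, p ∈ Sstar ∨ ∃ q ∈ Sstar, dist p q ≤ r) :
    S.card ≤ 5 * Sstar.card := by
  have hcovered : ∀ s ∈ S, 1 ≤ #(Sstar.bipartiteAbove (fun s q => dist s q ≤ r) s) := by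
    intro s hs
    obtain ⟨q, hq, hsq⟩ := (hcov s (hSP hs)).elim (fun h => ⟨s, h, by simpa⟩) id
    exact card_pos.2 ⟨q, mem_filter.2 ⟨hq, hsq⟩⟩
  have hpacked : ∀ q ∈ Sstar, #(S.bipartiteBelow (fun s q => dist s q ≤ r) q) ≤ 5 :=
    fun q _ => card_le_five_of_dist_le_of_lt_dist finrank_euclideanSpace_fin
      (fun t ht => (mem_filter.1 ht).2)
      (fun a ha b hb => hSind a (mem_filter.1 ha).1 b (mem_filter.1 hb).1)
  simpa [mul_comm] using card_mul_le_card_mul _ hcovered hpacked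

/-- In the Euclidean plane, for any finite set `P` and `r ≥ 0`,
every `r`-independent subset `S` of `P` is at most 5 times larger than any
subset `S*` of `P` satisfying the `r`-coverage condition on `P`. In particular,
any `r`-DisC diverse subset of `P` is at most 5 times larger than a minimum
`r`-DisC diverse subset of `P`. -/
theorem disc_size_bound_plane (P : Finset (EuclideanSpace ℝ (Fin 2)))
    (r : ℝ) (hr : 0 ≤ r)
    (S : Finset (EuclideanSpace ℝ (Fin 2))) (hSP : S ⊆ P)
    (hSind : ∀ a ∈ S, ∀ b ∈ S, a ≠ b → dist a b > r)
    (Sstar : Finset (EuclideanSpace ℝ (Fin 2))) (hSstarP : Sstar ⊆ P)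
    (hcov : ∀ p ∈ P, p ∈ Sstar ∨ ∃ q ∈ Sstar, dist p q ≤ r) :
    S.card ≤ 5 * Sstar.card :=
  disc_size_bound_plane_general P r hr S hSP hSind Sstar hcov
end
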